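/- arXiv:1805.06706 — 5 statements merged into one kernel-verified Lean document; each statement's English description precedes it below -/
import Mathlib

section
/- Let α_1, …, α_k ∈ 𝔽_{q^m} with Tr_{𝔽_{q^m}/𝔽_q}(α_i) = 0 for all i, let s be a positive integer coprime to m, write σ(z) = z^{q^s}, and suppose β_1, …, β_k ∈ 𝔽_{q^m} satisfy σ(β_i) − β_i = α_i for all i. Then α_1, …, α_k are linearly independent over 𝔽_q if and only if 1, β_1, …, β_k are linearly independent over 𝔽_q. -/
open Finset

/-- The explicit trace map of `𝔽_{q^m}/𝔽_q`: `Tr(x) = ∑_{i=0}^{m-1} x^{q^i}`. -/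
def fieldTrace (q m : ℕ) {L : Type*} [Field L] (x : L) : L :=
  ∑ i ∈ Finset.range m, x ^ q ^ i

/-- The `q`-rank of a vector with entries in `L`: the `K`-dimension of the
`K`-span of its entries. -/
noncomputable def rkq (K : Type*) {L : Type*} [Field K] [Field L] [Algebra K L]
    {ι : Type*} (v : ι → L) : ℕ :=
  Module.finrank K (Submodule.span K (Set.range v))

/-- The code `C_X`: the `L`-row space of the matrix `(I_k | X)`. -/
noncomputable def CX {L : Type*} [Field L] {k r : ℕ} (X : Matrix (Fin k) (Fin r) L) :
    Submodule L (Fin (k + r) → L) :=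
  Submodule.span L (Set.range fun i : Fin k =>
    Matrix.reindex (Equiv.refl (Fin k)) finSumFinEquiv
      (Matrix.fromCols (1 : Matrix (Fin k) (Fin k) L) X) i)

/-- The minimum rank distance of a linear code `C`. -/
noncomputable def minRankDist (K : Type*) {L : Type*} [Field K] [Field L] [Algebra K L]
    {n : ℕ} (C : Submodule L (Fin n → L)) : ℕ :=
  sInf {d : ℕ | ∃ c ∈ C, c ≠ 0 ∧ rkq K c = d}

/-- `C` is a generalized Gabidulin code of parameter `s` and dimension `k`:
it is the `L`-row space of an `s`-Moore matrix `M_{s,k}(g)` for some `g` of full `q`-rank. -/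
def IsGabidulin (K : Type*) {L : Type*} [Field K] [Field L] [Algebra K L]
    (q s k : ℕ) {n : ℕ} (C : Submodule L (Fin n → L)) : Prop :=
  ∃ g : Fin n → L, rkq K g = n ∧
    C = Submodule.span L (Set.range fun i : Fin k => fun j => g j ^ q ^ (s * (i : ℕ)))

/-- The map `Φ_s` applying `x ↦ x^{q^s} - x` entrywise to a matrix. -/
def PhiS (q s : ℕ) {L : Type*} [Field L] {k r : ℕ} (X : Matrix (Fin k) (Fin r) L) :
    Matrix (Fin k) (Fin r) L :=
  Matrix.of fun i j => X i j ^ q ^ s - X i j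

/-- A matrix is superregular if all of its minors are nonzero. -/
def Superregular {L : Type*} [Field L] {a b : ℕ} (M : Matrix (Fin a) (Fin b) L) : Prop :=
  ∀ (t : ℕ) (f : Fin t → Fin a) (g : Fin t → Fin b),
    StrictMono f → StrictMono g → (M.submatrix f g).det ≠ 0

/-!
The map `D z = z ^ q ^ s - z` is `𝔽_q`-linear and `α = D ∘ β`. Every `z` has period `m` under
`z ↦ z ^ q`, so a fixed point of `z ↦ z ^ q ^ s` has period `gcd(s, m) = 1` and lies in `𝔽_q`:
`ker D = 𝔽_q ∙ 1`. For any linear map whose kernel is the line through `x ≠ 0`, `D ∘ β` is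
independent iff `β` is independent and its span misses `x`, i.e. iff `x, β₁, …, β_k` are.
-/

theorem LinearMap.linearIndependent_comp_iff_finCons {K V W : Type*} [DivisionRing K]
    [AddCommGroup V] [Module K V] [AddCommGroup W] [Module K W] {f : V →ₗ[K] W} {x : V}
    (hx : x ≠ 0) (hker : LinearMap.ker f = K ∙ x) {n : ℕ} (v : Fin n → V) :
    LinearIndependent K (f ∘ v) ↔ LinearIndependent K (Fin.cons x v : Fin (n + 1) → V) := by
  rw [linearIndependent_finCons, ← Submodule.disjoint_span_singleton' hx, ← hker]
  exact ⟨fun h => ⟨h.of_comp, Submodule.range_ker_disjoint h⟩,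
    fun ⟨hv, hd⟩ => (f.linearIndependent_iff_of_disjoint hd).mpr hv⟩

namespace FiniteField

section

variable (K R : Type*) [Field K] [Fintype K] [CommRing R] [Algebra K R]

noncomputable def frobeniusPowSubId (s : ℕ) : R →ₗ[K] R :=
  (frobeniusAlgHom K R ^ s).toLinearMap - LinearMap.id

variable {K R} in
theorem frobeniusPowSubId_apply (s : ℕ) (z : R) :
    frobeniusPowSubId K R s z = z ^ Fintype.card K ^ s - z := by
  simp [frobeniusPowSubId, AlgHom.coe_pow, coe_frobeniusAlgHom, pow_iterate]

end

variable (K L : Type*) [Field K] [Field L] [Algebra K L] [Fintype K] [Finite L]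

theorem mem_range_algebraMap_of_pow_card_eq_self {z : L} (hz : z ^ Fintype.card K = z) :
    z ∈ Set.range (algebraMap K L) := by
  rw [IsGalois.mem_range_algebraMap_iff_fixed]
  intro f
  obtain ⟨n, rfl⟩ := (bijective_frobeniusAlgEquivOfAlgebraic_pow K L).2 f
  rw [AlgEquiv.coe_pow, coe_frobeniusAlgEquivOfAlgebraic]
  exact Function.IsFixedPt.iterate hz n

theorem pow_card_pow_eq_self_iff_mem_range {s : ℕ} (hsm : s.Coprime (Module.finrank K L))
    {z : L} : z ^ Fintype.card K ^ s = z ↔ z ∈ Set.range (algebraMap K L) := by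
  have := Fintype.ofFinite L
  refine ⟨fun hz => ?_, ?_⟩
  · have hs : Function.IsPeriodicPt (· ^ Fintype.card K) s z := by
      simpa [Function.IsPeriodicPt, Function.IsFixedPt, pow_iterate] using hz
    have hm : Function.IsPeriodicPt (· ^ Fintype.card K) (Module.finrank K L) z := by
      simpa [Function.IsPeriodicPt, Function.IsFixedPt, pow_iterate, ← Module.card_eq_pow_finrank]
        using pow_card z
    have hz1 := hs.gcd hm
    rw [Nat.Coprime.gcd_eq_one hsm] at hz1
    exact mem_range_algebraMap_of_pow_card_eq_self K L hz1
  · rintro ⟨c, rfl⟩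
    rw [← map_pow, pow_card_pow]

theorem ker_frobeniusPowSubId {s : ℕ} (hsm : s.Coprime (Module.finrank K L)) :
    LinearMap.ker (frobeniusPowSubId K L s) = K ∙ 1 := by
  ext z
  rw [LinearMap.mem_ker, frobeniusPowSubId_apply, sub_eq_zero,
    pow_card_pow_eq_self_iff_mem_range K L hsm, Submodule.mem_span_singleton]
  simp only [Set.mem_range, Algebra.algebraMap_eq_smul_one]

end FiniteField

theorem stmt5_general {K L : Type*} [Field K] [Field L] [Algebra K L] [Fintype K] [Fintype L]
    (q m s : ℕ) (hq : Fintype.card K = q) (hm : Module.finrank K L = m)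
    (hsm : Nat.Coprime s m)
    (k : ℕ) (α β : Fin k → L)
    (hβ : ∀ i, β i ^ q ^ s - β i = α i) :
    LinearIndependent K α ↔ LinearIndependent K (Fin.cons (1 : L) β : Fin (k + 1) → L) := by
  subst hq hm
  have hαβ : α = FiniteField.frobeniusPowSubId K L s ∘ β :=
    funext fun i => by rw [Function.comp_apply, FiniteField.frobeniusPowSubId_apply, hβ]
  rw [hαβ, LinearMap.linearIndependent_comp_iff_finCons one_ne_zero
    (FiniteField.ker_frobeniusPowSubId K L hsm)]

/-- if `Tr(αᵢ) = 0` and `σ(βᵢ) - βᵢ = αᵢ` (with `σ(z) = z^{q^s}`), then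
`α₁, …, α_k` are `𝔽_q`-linearly independent iff `1, β₁, …, β_k` are. -/
theorem stmt5 {K L : Type*} [Field K] [Field L] [Algebra K L] [Fintype K] [Fintype L]
    (q m s : ℕ) (hq : Fintype.card K = q) (hm : Module.finrank K L = m)
    (hs : 0 < s) (hsm : Nat.Coprime s m)
    (k : ℕ) (α β : Fin k → L)
    (hα : ∀ i, fieldTrace q m (α i) = 0)
    (hβ : ∀ i, β i ^ q ^ s - β i = α i) :
    LinearIndependent K α ↔ LinearIndependent K (Fin.cons (1 : L) β : Fin (k + 1) → L) :=
  stmt5_general q m s hq hm hsm k α β hβ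
end

section
/- Let X ∈ 𝔽_{q^m}^{k×(n−k)}, let B ∈ 𝔽_q^{k×(n−k)} be a matrix with all entries in the base field 𝔽_q, and let s be a positive integer coprime to m. If the code C_X is a generalized Gabidulin code of parameter s, then the code C_{X+B} is a generalized Gabidulin code of parameter s. -/
open Finset

/-! Right multiplication by the invertible `𝔽_q`-matrix `[[I, B], [0, I]]` maps the rows of
`(I | X)` to those of `(I | X + B)`, hence `C_X` onto `C_{X+B}`. Having coefficients in `𝔽_q`,
this map commutes with the entrywise `𝔽_q`-linear Frobenius power `x ↦ x^{q^{si}}`, so it sends the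
`s`-Moore matrix of `g` to that of `g P`; and `g P` has the same `𝔽_q`-span as `g`, hence full
`q`-rank. -/

open Matrix

section VecMul

variable {K L : Type*} [Field K] [Field L] [Algebra K L] {n : Type*} [Fintype n]

lemma vecMul_map_algebraMap_apply (v : n → L) (P : Matrix n n K) (j : n) :
    (v ᵥ* P.map (algebraMap K L)) j = ∑ i, P i j • v i := by
  simp only [vecMul, dotProduct, map_apply, Algebra.smul_def, mul_comm]

lemma comp_vecMul_map_algebraMap (σ : L →ₗ[K] L) (v : n → L) (P : Matrix n n K) :
    σ ∘ (v ᵥ* P.map (algebraMap K L)) = (σ ∘ v) ᵥ* P.map (algebraMap K L) := by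
  funext j
  simp only [Function.comp_apply, vecMul_map_algebraMap_apply, map_sum, map_smul]

lemma span_range_vecMul_map_algebraMap_le (v : n → L) (P : Matrix n n K) :
    Submodule.span K (Set.range (v ᵥ* P.map (algebraMap K L))) ≤
      Submodule.span K (Set.range v) := by
  rw [Submodule.span_le]
  rintro _ ⟨j, rfl⟩
  rw [vecMul_map_algebraMap_apply]
  exact Submodule.sum_mem _ fun i _ => Submodule.smul_mem _ _ (Submodule.subset_span ⟨i, rfl⟩)

lemma span_range_vecMul_map_algebraMap [DecidableEq n] (v : n → L) {P : Matrix n n K}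
    (hP : IsUnit P) :
    Submodule.span K (Set.range (v ᵥ* P.map (algebraMap K L))) =
      Submodule.span K (Set.range v) := by
  refine le_antisymm (span_range_vecMul_map_algebraMap_le v P) ?_
  have hv : v = (v ᵥ* P.map (algebraMap K L)) ᵥ* P⁻¹.map (algebraMap K L) := by
    rw [vecMul_vecMul, ← Matrix.map_mul, mul_nonsing_inv _ ((isUnit_iff_isUnit_det P).mp hP),
      Matrix.map_one _ (map_zero _) (map_one _), vecMul_one]
  conv_lhs => rw [hv]
  exact span_range_vecMul_map_algebraMap_le _ _

lemma rkq_vecMul_map_algebraMap [DecidableEq n] (v : n → L) {P : Matrix n n K}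
    (hP : IsUnit P) : rkq K (v ᵥ* P.map (algebraMap K L)) = rkq K v := by
  rw [rkq, rkq, span_range_vecMul_map_algebraMap v hP]

end VecMul

lemma pow_card_pow_eq_frobeniusAlgHom_pow {K L : Type*} [Field K] [Fintype K] [Field L]
    [Algebra K L] (u : ℕ) (x : L) :
    x ^ Fintype.card K ^ u = (FiniteField.frobeniusAlgHom K L ^ u) x := by
  rw [AlgHom.coe_pow, FiniteField.coe_frobeniusAlgHom, pow_iterate]

lemma IsGabidulin.map_vecMulLinear {K L : Type*} [Field K] [Fintype K] [Field L] [Algebra K L]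
    {q s k n : ℕ} (hq : Fintype.card K = q) {C : Submodule L (Fin n → L)}
    (hC : IsGabidulin K q s k C) {P : Matrix (Fin n) (Fin n) K} (hP : IsUnit P) :
    IsGabidulin K q s k (C.map (vecMulLinear (P.map (algebraMap K L)))) := by
  subst hq
  obtain ⟨g, hg, rfl⟩ := hC
  refine ⟨g ᵥ* P.map (algebraMap K L), (rkq_vecMul_map_algebraMap g hP).trans hg, ?_⟩
  rw [Submodule.map_span, ← Set.range_comp]
  refine congrArg (Submodule.span L ∘ Set.range) (funext fun i => ?_)
  simp only [Function.comp_apply, vecMulLinear_apply, pow_card_pow_eq_frobeniusAlgHom_pow]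
  exact (comp_vecMul_map_algebraMap (FiniteField.frobeniusAlgHom K L ^ (s * (i : ℕ))).toLinearMap
    g P).symm

section BlockShear

variable {R : Type*} [CommRing R] {k r : ℕ}

def blockShear (B : Matrix (Fin k) (Fin r) R) : Matrix (Fin (k + r)) (Fin (k + r)) R :=
  reindex finSumFinEquiv finSumFinEquiv (fromBlocks 1 B 0 1)

lemma isUnit_blockShear (B : Matrix (Fin k) (Fin r) R) : IsUnit (blockShear B) := by
  rw [(blockShear B).isUnit_iff_isUnit_det, blockShear, det_reindex_self, det_fromBlocks_zero₂₁]
  simp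

lemma blockShear_map {S : Type*} [CommRing S] (f : R →+* S) (B : Matrix (Fin k) (Fin r) R) :
    (blockShear B).map f = blockShear (B.map f) := by
  rw [blockShear, blockShear, reindex_apply, reindex_apply, ← submatrix_map, fromBlocks_map,
    Matrix.map_one f f.map_zero f.map_one, Matrix.map_one f f.map_zero f.map_one,
    Matrix.map_zero f f.map_zero]

end BlockShear

lemma CX_add {L : Type*} [Field L] {k r : ℕ} (X B : Matrix (Fin k) (Fin r) L) :
    CX (X + B) = (CX X).map (vecMulLinear (blockShear B)) := by
  -- without the ascription, `*` is elaborated at `CStarMatrix`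
  have hmul : (reindex (Equiv.refl (Fin k)) finSumFinEquiv (fromCols 1 X) :
      Matrix (Fin k) (Fin (k + r)) L) * blockShear B =
      reindex (Equiv.refl (Fin k)) finSumFinEquiv (fromCols 1 (X + B)) := by
    rw [blockShear, reindex_apply, reindex_apply, reindex_apply, submatrix_mul_equiv,
      fromCols_mul_fromBlocks]
    simp [add_comm]
  rw [CX, CX, Submodule.map_span, ← Set.range_comp, ← hmul]
  rfl

theorem stmt7_general {K L : Type*} [Field K] [Field L] [Algebra K L] [Fintype K]
    (q k r s : ℕ) (hq : Fintype.card K = q)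
    (X : Matrix (Fin k) (Fin r) L) (B : Matrix (Fin k) (Fin r) K)
    (hX : IsGabidulin K q s k (CX X)) :
    IsGabidulin K q s k (CX (X + B.map (algebraMap K L))) := by
  rw [CX_add, ← blockShear_map]
  exact hX.map_vecMulLinear hq (isUnit_blockShear B)

/-- if `C_X` is a generalized Gabidulin code of parameter `s` and `B` has all
entries in the base field `𝔽_q`, then `C_{X+B}` is a generalized Gabidulin code of
parameter `s`. -/
theorem stmt7 {K L : Type*} [Field K] [Field L] [Algebra K L] [Fintype K] [Fintype L]
    (q m k r s : ℕ) (hq : Fintype.card K = q) (hm : Module.finrank K L = m)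
    (hk : 0 < k) (hr : 0 < r) (hnm : k + r ≤ m) (hs : 0 < s) (hsm : Nat.Coprime s m)
    (X : Matrix (Fin k) (Fin r) L) (B : Matrix (Fin k) (Fin r) K)
    (hX : IsGabidulin K q s k (CX X)) :
    IsGabidulin K q s k (CX (X + B.map (algebraMap K L))) :=
  stmt7_general q k r s hq X B hX
end

section
/- Let X = (x_{i,j}) ∈ 𝔽_{q^m}^{k×(n−k)}. (1) If there exists a row index i such that the elements 1, x_{i,1}, …, x_{i,n−k} are linearly dependent over 𝔽_q (i.e., rk_q(1, x_{i,1}, …, x_{i,n−k}) < n−k+1), then C_X is not MRD. (2) If there exists a column index j such that 1, x_{1,j}, …, x_{k,j} are linearly dependent over 𝔽_q (i.e., rk_q(1, x_{1,j}, …, x_{k,j}) < k+1), then C_X is not MRD. -/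
open Finset

/-!
Every codeword of `C_X` has the form `(a, a X)`. For `a = eᵢ` this is the `i`-th row
`(eᵢ, xᵢ)`, whose entries lie in the `𝔽_q`-span of `1, x_{i,1}, …, x_{i,r}`. A dependence
`λ₀ + ∑ λᵢ x_{i,j} = 0` gives `a = (λ₁, …, λₖ) ≠ 0`, and then all entries of `(a, a X)` in the
information part and in column `j` lie in `𝔽_q`, so the codeword has rank at most `r`.
Either way some nonzero codeword has rank `< r + 1`.
-/

section RankWeight

variable {K L : Type*} [Field K] [Field L] [Algebra K L]

theorem rkq_le_rkq_of_range_subset_span {ι ι' : Type*} [Finite ι'] {v : ι → L} {w : ι' → L}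
    (h : Set.range v ⊆ Submodule.span K (Set.range w)) : rkq K v ≤ rkq K w :=
  have := FiniteDimensional.span_of_finite K (Set.finite_range w)
  Submodule.finrank_mono (Submodule.span_le.mpr h)

theorem rkq_le_card {ι : Type*} [Fintype ι] (v : ι → L) : rkq K v ≤ Fintype.card ι :=
  finrank_range_le_card v

theorem rkq_comp_equiv {ι ι' : Type*} (v : ι → L) (e : ι' ≃ ι) : rkq K (v ∘ e) = rkq K v := by
  rw [rkq, rkq, e.surjective.range_comp]

theorem not_linearIndependent_of_rkq_lt_card {ι : Type*} [Fintype ι] {v : ι → L}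
    (h : rkq K v < Fintype.card ι) : ¬LinearIndependent K v := fun hv =>
  h.ne (finrank_span_eq_card hv)

theorem minRankDist_le_rkq {n : ℕ} {C : Submodule L (Fin n → L)} {c : Fin n → L} (hc : c ∈ C)
    (hc0 : c ≠ 0) : minRankDist K C ≤ rkq K c :=
  Nat.sInf_le ⟨c, hc, hc0, rfl⟩

end RankWeight

section SystematicCode

open Matrix

variable {K L : Type*} [Field K] [Field L] [Algebra K L] {k r : ℕ}

theorem sumElim_vecMul_comp_symm_mem_CX (X : Matrix (Fin k) (Fin r) L) (a : Fin k → L) :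
    Sum.elim a (a ᵥ* X) ∘ finSumFinEquiv.symm ∈ CX X := by
  rw [CX, ← row_def, ← range_vecMulLinear]
  refine ⟨a, ?_⟩
  rw [vecMulLinear_apply, reindex_apply, submatrix_vecMul_equiv]
  simp only [Equiv.refl_symm, Equiv.coe_refl, Function.comp_id, vecMul_fromCols, vecMul_one]

theorem minRankDist_CX_le_rkq_sumElim (X : Matrix (Fin k) (Fin r) L) {a : Fin k → L}
    (ha : a ≠ 0) : minRankDist K (CX X) ≤ rkq K (Sum.elim a (a ᵥ* X)) := by
  rw [← rkq_comp_equiv _ finSumFinEquiv.symm]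
  refine minRankDist_le_rkq (sumElim_vecMul_comp_symm_mem_CX X a) fun h => ha ?_
  funext i
  simpa using congrFun h (finSumFinEquiv (Sum.inl i))

theorem minRankDist_CX_le_rkq_cons_row (X : Matrix (Fin k) (Fin r) L) (i : Fin k) :
    minRankDist K (CX X) ≤ rkq K (Fin.cons (1 : L) (X i) : Fin (r + 1) → L) := by
  classical
  refine (minRankDist_CX_le_rkq_sumElim X (a := Pi.single i 1) (by simp)).trans
    (rkq_le_rkq_of_range_subset_span ?_)
  rw [single_one_vecMul, row_def, Set.Sum.elim_range, Set.union_subset_iff]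
  constructor
  · rintro _ ⟨t, rfl⟩
    rcases eq_or_ne t i with rfl | ht
    · exact Submodule.subset_span ⟨0, by simp⟩
    · simp [ht]
  · rintro _ ⟨t, rfl⟩
    exact Submodule.subset_span ⟨t.succ, Fin.cons_succ _ _ _⟩

theorem minRankDist_CX_le_of_not_linearIndependent_col (X : Matrix (Fin k) (Fin r) L) (j : Fin r)
    (h : ¬LinearIndependent K (Fin.cons (1 : L) fun i => X i j : Fin (k + 1) → L)) :
    minRankDist K (CX X) ≤ r := by
  obtain ⟨a, hsum, l, hl⟩ := Fintype.not_linearIndependent_iff.mp h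
  simp only [Fin.sum_univ_succ, Fin.cons_zero, Fin.cons_succ] at hsum
  set b : Fin k → L := fun i => algebraMap K L (a i.succ)
  have hb : b ≠ 0 := by
    intro hb0
    have htail : ∀ i : Fin k, a i.succ = 0 := fun i =>
      (algebraMap K L).injective ((congrFun hb0 i).trans (map_zero _).symm)
    have hhead : a 0 = 0 := by simpa [htail] using hsum
    exact hl (Fin.cases hhead htail l)
  have hbj : (b ᵥ* X) j = algebraMap K L (-a 0) := by
    simp only [vecMul, dotProduct, b, ← Algebra.smul_def]
    rw [map_neg, Algebra.algebraMap_eq_smul_one]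
    exact eq_neg_of_add_eq_zero_right hsum
  -- Entry `j` of `b ᵥ* X` lies in `K`, so trading it for `1` keeps every entry in the span.
  set w := Function.update (b ᵥ* X) j 1
  have halg : ∀ x : K, algebraMap K L x ∈ Submodule.span K (Set.range w) := fun x => by
    rw [Algebra.algebraMap_eq_smul_one]
    exact Submodule.smul_mem _ _ (Submodule.subset_span ⟨j, Function.update_self ..⟩)
  refine (minRankDist_CX_le_rkq_sumElim X hb).trans
    ((rkq_le_rkq_of_range_subset_span ?_).trans ((rkq_le_card w).trans (Fintype.card_fin r).le))
  rw [Set.Sum.elim_range, Set.union_subset_iff]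
  constructor
  · rintro _ ⟨t, rfl⟩
    exact halg _
  · rintro _ ⟨t, rfl⟩
    rcases eq_or_ne t j with rfl | ht
    · exact hbj ▸ halg _
    · exact Submodule.subset_span ⟨t, Function.update_of_ne ht ..⟩

end SystematicCode

theorem stmt8_general {K L : Type*} [Field K] [Field L] [Algebra K L] (k r : ℕ)
    (X : Matrix (Fin k) (Fin r) L) :
    ((∃ i : Fin k, rkq K (Fin.cons (1 : L) (X i) : Fin (r + 1) → L) < r + 1) →
      minRankDist K (CX X) ≠ r + 1) ∧
    ((∃ j : Fin r, rkq K (Fin.cons (1 : L) (fun i => X i j) : Fin (k + 1) → L) < k + 1) →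
      minRankDist K (CX X) ≠ r + 1) := by
  refine ⟨fun ⟨i, hi⟩ => ?_, fun ⟨j, hj⟩ => ?_⟩
  · exact ((minRankDist_CX_le_rkq_cons_row X i).trans_lt hi).ne
  · have hdep := not_linearIndependent_of_rkq_lt_card (by rwa [Fintype.card_fin])
    exact ((minRankDist_CX_le_of_not_linearIndependent_col X j hdep).trans_lt r.lt_succ_self).ne

/-- (1) if for some row `i` the elements `1, x_{i,1}, …, x_{i,r}` are
`𝔽_q`-linearly dependent then `C_X` is not MRD; (2) if for some column `j` the elements
`1, x_{1,j}, …, x_{k,j}` are `𝔽_q`-linearly dependent then `C_X` is not MRD. -/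
theorem stmt8 {K L : Type*} [Field K] [Field L] [Algebra K L] [Fintype K] [Fintype L]
    (q m k r : ℕ) (hq : Fintype.card K = q) (hm : Module.finrank K L = m)
    (hk : 0 < k) (hr : 0 < r) (hnm : k + r ≤ m)
    (X : Matrix (Fin k) (Fin r) L) :
    ((∃ i : Fin k, rkq K (Fin.cons (1 : L) (X i) : Fin (r + 1) → L) < r + 1) →
      minRankDist K (CX X) ≠ r + 1) ∧
    ((∃ j : Fin r, rkq K (Fin.cons (1 : L) (fun i => X i j) : Fin (k + 1) → L) < k + 1) →
      minRankDist K (CX X) ≠ r + 1) :=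
  stmt8_general k r X
end

section
/- Let s be a positive integer coprime to m and X ∈ 𝔽_{q^m}^{k×(n−k)}. Then C_X is a generalized Gabidulin code of parameter s if and only if there exist α ∈ 𝔽_{q^m}^k and β ∈ 𝔽_{q^m}^{n−k} such that (a) rk_q(α) = k, (b) rk_q(β) = n−k, (c) supp_q(β) ⊆ supp_q(α)^×, and Φ_s(X) = α^T β. -/
open Finset

/-!
Put `σ x = x ^ q ^ s`. Since `gcd (s, m) = 1`, the powers of `σ` exhaust the Galois group, so the
fixed field of `σ` is `𝔽_q`; the whole argument works for any automorphism `σ` with fixed field `K`.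

The Moore matrix `A = (σⁱ gₗ)` of `K`-independent `g` is invertible: after dividing by `g₀`, row
reduction `Rᵢ₊₁ ↦ Rᵢ₊₁ - Rᵢ` turns it into `1 ⊕ M(σh - h)`, and `σh - h` is again independent
because `ker (σ - 1) = K`.

If `C_X` is spanned by the Moore matrix of `(g, b)`, then `A X = M(b)`. Since the rows of `A X`
are successive `σ`-images, all rows of `A Φ(X)` but the first vanish, so `Φ(X) = αᵀβ` with `α` the
first column of `A⁻¹`. Conversely, an independent `g` with `A α = e₀` exists (the first column of
the inverse `σ⁻¹`-Moore matrix of `α`), and `A Φ(X) = e₀ β` makes the rows of `A X` successive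
`σ`-images, i.e. `A X = M(b)`. In both directions `K`-relations among the `βⱼ` match relations of
`b` modulo `span g`, because `Φ(X c) = α (β ⬝ c)` vanishes iff `X c` has entries in `K`. The trace
condition holds since `αₗ βⱼ = σ Xₗⱼ - Xₗⱼ` has trace zero.
-/

open Matrix

section MooreMatrix

variable {K L : Type*} [Field K] [Field L] [Algebra K L]

def mooreMatrix (σ : L ≃ₐ[K] L) (k : ℕ) {ι : Type*} (g : ι → L) : Matrix (Fin k) ι L :=
  Matrix.of fun i j => (σ ^ (i : ℕ)) (g j)

@[simp] lemma mooreMatrix_apply (σ : L ≃ₐ[K] L) (k : ℕ) {ι : Type*} (g : ι → L) (i : Fin k)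
    (j : ι) : mooreMatrix σ k g i j = (σ ^ (i : ℕ)) (g j) := rfl

lemma AlgEquiv.pow_succ_apply (σ : L ≃ₐ[K] L) (i : ℕ) (x : L) :
    (σ ^ (i + 1)) x = σ ((σ ^ i) x) := by
  rw [pow_succ', AlgEquiv.mul_apply]

lemma AlgEquiv.pow_apply_comm (σ : L ≃ₐ[K] L) (i : ℕ) (x : L) :
    (σ ^ i) (σ x) = σ ((σ ^ i) x) := by
  rw [← AlgEquiv.mul_apply, ← pow_succ, AlgEquiv.pow_succ_apply]

lemma linearIndependent_apply_tail_sub_self {σ : L ≃ₐ[K] L}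
    (hσ : ∀ x, σ x = x → x ∈ Set.range (algebraMap K L)) {t : ℕ} {v : Fin (t + 1) → L}
    (hv : LinearIndependent K v) (h0 : v 0 = 1) :
    LinearIndependent K fun i : Fin t => σ (v i.succ) - v i.succ := by
  obtain ⟨htail, h0span⟩ := linearIndependent_finSucc.1 hv
  have hdisj : Disjoint (Submodule.span K (Set.range (Fin.tail v)))
      (LinearMap.ker (σ.toLinearMap - LinearMap.id)) := by
    refine Submodule.disjoint_def.2 fun x hx hker => ?_
    obtain ⟨c, rfl⟩ := hσ x (sub_eq_zero.1 hker)
    by_contra hc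
    have hc' : c ≠ 0 := fun h => hc (by rw [h, map_zero])
    refine h0span ?_
    rw [h0, show (1 : L) = c⁻¹ • algebraMap K L c by
      rw [Algebra.smul_def, ← map_mul, inv_mul_cancel₀ hc', map_one]]
    exact Submodule.smul_mem _ _ hx
  exact htail.map hdisj

lemma det_mooreMatrix_of_apply_zero_eq_one (σ : L ≃ₐ[K] L) {t : ℕ} {g : Fin (t + 1) → L}
    (h0 : g 0 = 1) :
    (mooreMatrix σ (t + 1) g).det =
      (mooreMatrix σ t fun i : Fin t => σ (g i.succ) - g i.succ).det := by
  let B : Matrix (Fin (t + 1)) (Fin (t + 1)) L :=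
    Matrix.of fun i j => Fin.cases (g j) (fun i' : Fin t => (σ ^ (i' : ℕ)) (σ (g j) - g j)) i
  have hB : (mooreMatrix σ (t + 1) g).det = B.det := by
    refine det_eq_of_forall_row_eq_smul_add_pred (fun _ => 1) (fun j => by simp [B]) fun i j => ?_
    simp only [mooreMatrix_apply, B, of_apply, Fin.cases_succ, Fin.val_succ, Fin.val_castSucc,
      map_sub, one_mul, pow_succ, AlgEquiv.mul_apply, sub_add_cancel]
  rw [hB, det_succ_column_zero, Fin.sum_univ_succ]
  simp only [B, of_apply, Fin.cases_zero, Fin.cases_succ, h0, map_one, sub_self, map_zero,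
    mul_zero, zero_mul, Finset.sum_const_zero, add_zero, Fin.val_zero, pow_zero, one_mul,
    Fin.succAbove_zero]
  rfl

lemma det_mooreMatrix_mul_left (σ : L ≃ₐ[K] L) {k : ℕ} (c : L) (h : Fin k → L) :
    (mooreMatrix σ k fun j => c * h j).det =
      (∏ i : Fin k, (σ ^ (i : ℕ)) c) * (mooreMatrix σ k h).det := by
  rw [← det_mul_column]
  congr 1
  ext i j
  simp

theorem det_mooreMatrix_ne_zero {σ : L ≃ₐ[K] L}
    (hσ : ∀ x, σ x = x → x ∈ Set.range (algebraMap K L)) :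
    ∀ {k : ℕ} {g : Fin k → L}, LinearIndependent K g → (mooreMatrix σ k g).det ≠ 0
  | 0, _, _ => by simp
  | t + 1, g, hg => by
    have hg0 : g 0 ≠ 0 := hg.ne_zero 0
    set h : Fin (t + 1) → L := fun j => (g 0)⁻¹ * g j
    have hh : LinearIndependent K h := hg.map' (LinearMap.mulLeft K (g 0)⁻¹)
      (LinearMap.ker_eq_bot.2 (mul_right_injective₀ (inv_ne_zero hg0)))
    have hgh : g = fun j => g 0 * h j := funext fun j => by simp [h, hg0]
    rw [hgh, det_mooreMatrix_mul_left, det_mooreMatrix_of_apply_zero_eq_one σ (by simp [h, hg0])]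
    exact mul_ne_zero (Finset.prod_ne_zero_iff.2 fun i _ => (map_ne_zero _).2 hg0)
      (det_mooreMatrix_ne_zero hσ (linearIndependent_apply_tail_sub_self hσ hh (by simp [h, hg0])))

/- If `∑ cₗ (A⁻¹)ₗ₀ = 0`, the row vector `y = c A⁻¹` has `y₀ = 0` and `y A = c` is `σ`-fixed.
Comparing `σ(y) σ(A)` with `y A`, whose rows overlap after a shift, gives `σ yᵢ = yᵢ₊₁`, hence
`y = 0`. -/
theorem linearIndependent_inv_mooreMatrix_apply_zero {σ : L ≃ₐ[K] L}
    (hσ : ∀ x, σ x = x → x ∈ Set.range (algebraMap K L)) {t : ℕ} {g : Fin (t + 1) → L}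
    (hg : LinearIndependent K g) :
    LinearIndependent K fun l => (mooreMatrix σ (t + 1) g)⁻¹ l 0 := by
  set A := mooreMatrix σ (t + 1) g
  have hA : IsUnit A.det := (det_mooreMatrix_ne_zero hσ hg).isUnit
  refine Fintype.linearIndependent_iff.2 fun c hc => ?_
  set c' : Fin (t + 1) → L := fun l => algebraMap K L (c l)
  set y := c' ᵥ* A⁻¹
  have hyA : ∀ l, ∑ i, y i * (σ ^ (i : ℕ)) (g l) = c' l := fun l => by
    rw [← congrFun (show y ᵥ* A = c' by rw [vecMul_vecMul, nonsing_inv_mul _ hA, vecMul_one]) l]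
    rfl
  have hy0 : y 0 = 0 := by
    rw [← hc]
    simp only [y, vecMul, dotProduct, c', Algebra.smul_def]
  have hσyA : ∀ l, ∑ i : Fin (t + 1), σ (y i) * (σ ^ (i : ℕ)) (σ (g l)) = c' l := fun l => by
    simp only [AlgEquiv.pow_apply_comm, ← map_mul, ← map_sum, hyA, c', AlgEquiv.commutes]
  have hyA' : ∀ l, ∑ i : Fin t, y i.succ * (σ ^ (i : ℕ)) (σ (g l)) = c' l := fun l => by
    rw [← hyA l, Fin.sum_univ_succ, hy0, zero_mul, zero_add]
    simp only [Fin.val_succ, pow_succ, AlgEquiv.mul_apply]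
  set z : Fin (t + 1) → L :=
    Fin.lastCases (σ (y (Fin.last t))) fun i => σ (y i.castSucc) - y i.succ
  have hz : z ᵥ* mooreMatrix σ (t + 1) (fun l => σ (g l)) = 0 := funext fun l => by
    have h := hσyA l
    rw [Fin.sum_univ_castSucc] at h
    simp only [Fin.val_castSucc] at h
    simp only [vecMul, dotProduct, Fin.sum_univ_castSucc, z, Fin.lastCases_castSucc,
      Fin.lastCases_last, mooreMatrix_apply, sub_mul, Finset.sum_sub_distrib, Fin.val_castSucc,
      Pi.zero_apply, hyA']
    rw [sub_add_eq_add_sub, h, sub_self]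
  have hz0 : z = 0 := by
    by_contra hz0
    exact det_mooreMatrix_ne_zero hσ (hg.map' σ.toLinearMap (LinearMap.ker_eq_bot.2 σ.injective))
      (exists_vecMul_eq_zero_iff.1 ⟨z, hz0, hz⟩)
  have hy : ∀ i, y i = 0 := Fin.induction hy0 fun i hi => by
    have h := congrFun hz0 i.castSucc
    simp only [z, Fin.lastCases_castSucc, hi, map_zero, zero_sub, Pi.zero_apply, neg_eq_zero] at h
    exact h
  intro l
  simpa [hy, c'] using (hyA l).symm

theorem exists_linearIndependent_mooreMatrix_mulVec_eq_single {σ : L ≃ₐ[K] L}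
    (hσ : ∀ x, σ x = x → x ∈ Set.range (algebraMap K L)) {t : ℕ} {α : Fin (t + 1) → L}
    (hα : LinearIndependent K α) :
    ∃ γ : Fin (t + 1) → L,
      LinearIndependent K γ ∧ mooreMatrix σ (t + 1) γ *ᵥ α = Pi.single 0 1 := by
  have hσinv : ∀ x, σ⁻¹ x = x → x ∈ Set.range (algebraMap K L) := fun x hx =>
    hσ x (by conv_lhs => rw [← hx, ← AlgEquiv.mul_apply, mul_inv_cancel, AlgEquiv.one_apply])
  set B := mooreMatrix σ⁻¹ (t + 1) α
  refine ⟨fun l => B⁻¹ l 0, linearIndependent_inv_mooreMatrix_apply_zero hσinv hα,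
    funext fun i => ?_⟩
  have hBB := congrFun (congrFun (mul_nonsing_inv B (det_mooreMatrix_ne_zero hσinv hα).isUnit) i) 0
  apply_fun σ ^ (i : ℕ) at hBB
  simp only [mul_apply, map_sum, map_mul, B, mooreMatrix_apply, inv_pow, ← AlgEquiv.mul_apply,
    mul_inv_cancel, AlgEquiv.one_apply] at hBB
  simp only [mulVec, dotProduct, mooreMatrix_apply, mul_comm _ (α _)]
  rw [hBB, one_apply, Pi.single_apply]
  split_ifs <;> simp

lemma span_range_mul_le {R : Type*} [Semiring R] {m n o : Type*} [Fintype m] (A : Matrix o m R)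
    (M : Matrix m n R) :
    Submodule.span R (Set.range (A * M)) ≤ Submodule.span R (Set.range M) := by
  rw [Submodule.span_le]
  rintro _ ⟨i, rfl⟩
  rw [show (A * M) i = ∑ l, A i l • M l from funext fun j => by simp [mul_apply]]
  exact Submodule.sum_mem _ fun l _ => Submodule.smul_mem _ _ (Submodule.subset_span ⟨l, rfl⟩)

lemma span_range_mul_of_isUnit {R : Type*} [CommRing R] {m n : Type*} [Fintype m] [DecidableEq m]
    {A : Matrix m m R} (hA : IsUnit A.det) (M : Matrix m n R) :
    Submodule.span R (Set.range (A * M)) = Submodule.span R (Set.range M) := by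
  refine (span_range_mul_le A M).antisymm ?_
  conv_lhs => rw [← Matrix.one_mul M, ← nonsing_inv_mul A hA, Matrix.mul_assoc]
  exact span_range_mul_le _ _

lemma submatrix_natAdd_eq_mul_of_span_le_CX {k r n : ℕ} {X : Matrix (Fin k) (Fin r) L}
    {M : Matrix (Fin n) (Fin (k + r)) L} (h : Submodule.span L (Set.range M) ≤ CX X) :
    M.submatrix id (Fin.natAdd k) = M.submatrix id (Fin.castAdd r) * X := by
  ext i j
  obtain ⟨T, hT⟩ := (Submodule.mem_span_range_iff_exists_fun L).1
    (h (Submodule.subset_span ⟨i, rfl⟩))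
  have hM : ∀ j', M i j' = ∑ l, T l * fromCols (1 : Matrix (Fin k) (Fin k) L) X l
      (finSumFinEquiv.symm j') := fun j' => by
    rw [← hT]
    simp [Finset.sum_apply]
  simp only [submatrix_apply, id, mul_apply, hM, finSumFinEquiv_symm_apply_castAdd,
    finSumFinEquiv_symm_apply_natAdd, fromCols_apply_inl, fromCols_apply_inr, one_apply,
    mul_ite, mul_one, mul_zero, Finset.sum_ite_eq', Finset.mem_univ, if_true]

lemma mooreMatrix_append_eq_mul (σ : L ≃ₐ[K] L) {k r : ℕ} (g₁ : Fin k → L) (b : Fin r → L)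
    (X : Matrix (Fin k) (Fin r) L) (hR : mooreMatrix σ k b = mooreMatrix σ k g₁ * X) :
    mooreMatrix σ k (Fin.append g₁ b) = mooreMatrix σ k g₁ *
      reindex (Equiv.refl (Fin k)) finSumFinEquiv (fromCols (1 : Matrix (Fin k) (Fin k) L) X) := by
  ext i j
  refine Fin.addCases (fun l => ?_) (fun j => ?_) j
  · simp [mul_apply, one_apply]
  · simpa [mul_apply] using congrFun (congrFun hR i) j

lemma mooreMatrix_mul_map_succ (σ : L ≃ₐ[K] L) {t : ℕ} {ι n : Type*} [Fintype ι] (g : ι → L)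
    (X : Matrix ι n L) (i : Fin t) (j : n) :
    (mooreMatrix σ (t + 1) g * X.map σ) i.succ j =
      σ ((mooreMatrix σ (t + 1) g * X) i.castSucc j) := by
  simp only [mul_apply, map_sum, map_mul, mooreMatrix_apply, map_apply, Fin.val_succ,
    Fin.val_castSucc, AlgEquiv.pow_succ_apply]

lemma exists_mooreMatrix_mul_map_sub_eq_vecMulVec_iff (σ : L ≃ₐ[K] L) {t : ℕ} {ι n : Type*}
    [Fintype ι] (g : ι → L) (X : Matrix ι n L) :
    (∃ β : n → L, mooreMatrix σ (t + 1) g * (X.map σ - X) = vecMulVec (Pi.single 0 1) β) ↔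
      mooreMatrix σ (t + 1) ((mooreMatrix σ (t + 1) g * X) 0) = mooreMatrix σ (t + 1) g * X := by
  set Y := mooreMatrix σ (t + 1) g * X
  have hsucc : ∀ (i : Fin t) j,
      (mooreMatrix σ (t + 1) g * (X.map σ - X)) i.succ j = σ (Y i.castSucc j) - Y i.succ j :=
    fun i j => by rw [Matrix.mul_sub, Matrix.sub_apply, mooreMatrix_mul_map_succ]
  constructor
  · rintro ⟨β, hβ⟩
    ext i j
    induction i using Fin.induction with
    | zero => simp
    | succ i ih =>
      have h := hsucc i j
      rw [hβ, ← ih] at h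
      simp only [vecMulVec_apply, Pi.single_apply, Fin.succ_ne_zero, if_false, zero_mul] at h
      simpa [AlgEquiv.pow_succ_apply] using sub_eq_zero.1 h.symm
  · intro hY
    refine ⟨(mooreMatrix σ (t + 1) g * (X.map σ - X)) 0, ?_⟩
    ext i j
    refine Fin.cases (by simp [vecMulVec_apply]) (fun i => ?_) i
    rw [hsucc, ← hY]
    simp [vecMulVec_apply, AlgEquiv.pow_succ_apply]

lemma mooreMatrix_mulVec_algebraMap (σ : L ≃ₐ[K] L) {k : ℕ} {ι : Type*} [Fintype ι] (g : ι → L)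
    (c : ι → K) (i : Fin k) :
    (mooreMatrix σ k g *ᵥ fun j => algebraMap K L (c j)) i = (σ ^ (i : ℕ)) (∑ j, c j • g j) := by
  simp only [mulVec, dotProduct, mooreMatrix_apply, map_sum]
  exact Finset.sum_congr rfl fun j _ => by rw [map_smul, Algebra.smul_def, mul_comm]

lemma sub_mulVec_eq_of_map_sub_eq_vecMulVec (σ : L ≃ₐ[K] L) {k r : ℕ}
    {X : Matrix (Fin k) (Fin r) L} {α : Fin k → L} {β : Fin r → L}
    (hΦ : X.map σ - X = vecMulVec α β) (c : Fin r → K) (l : Fin k) :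
    σ ((X *ᵥ fun j => algebraMap K L (c j)) l) - (X *ᵥ fun j => algebraMap K L (c j)) l =
      α l * ∑ j, c j • β j := by
  have h : ∀ j, σ (X l j) - X l j = α l * β j := fun j => by
    simpa [vecMulVec_apply] using congrFun (congrFun hΦ l) j
  simp only [mulVec, dotProduct, map_sum, map_mul, AlgEquiv.commutes, ← Finset.sum_sub_distrib,
    ← sub_mul, h, Finset.mul_sum, Algebra.smul_def]
  exact Finset.sum_congr rfl fun j _ => by ring

lemma linearIndependent_of_map_sub_eq_vecMulVec {σ : L ≃ₐ[K] L}
    (hσ : ∀ x, σ x = x → x ∈ Set.range (algebraMap K L)) {k r : ℕ}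
    {X : Matrix (Fin k) (Fin r) L} {α : Fin k → L} {β : Fin r → L}
    (hΦ : X.map σ - X = vecMulVec α β) {g : Fin (k + r) → L} (hg : LinearIndependent K g)
    (hb : ∀ j, g (Fin.natAdd k j) = ∑ l, g (Fin.castAdd r l) * X l j) :
    LinearIndependent K β := by
  refine Fintype.linearIndependent_iff.2 fun c hc => ?_
  set ξ := X *ᵥ fun j => algebraMap K L (c j)
  choose κ hκ using fun l => hσ (ξ l) <| sub_eq_zero.1 <| by
    rw [sub_mulVec_eq_of_map_sub_eq_vecMulVec σ hΦ c l, hc, mul_zero]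
  have hcκ : ∑ j, c j • g (Fin.natAdd k j) = ∑ l, κ l • g (Fin.castAdd r l) := by
    simp only [hb, Algebra.smul_def, hκ, ξ, mulVec, dotProduct, Finset.mul_sum, Finset.sum_mul]
    rw [Finset.sum_comm]
    exact Finset.sum_congr rfl fun _ _ => Finset.sum_congr rfl fun _ _ => by ring
  have h0 := Fintype.linearIndependent_iff.1 hg (Fin.append (-κ) c) <| by
    simp only [Fin.sum_univ_add, Fin.append_left, Fin.append_right, Pi.neg_apply, neg_smul,
      Finset.sum_neg_distrib, hcκ, neg_add_cancel]
  intro j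
  simpa using h0 (Fin.natAdd k j)

lemma linearIndependent_append_of_map_sub_eq_vecMulVec (σ : L ≃ₐ[K] L) {k r : ℕ}
    {X : Matrix (Fin k) (Fin r) L} {α : Fin k → L} {β : Fin r → L}
    (hΦ : X.map σ - X = vecMulVec α β) (hα : α ≠ 0) (hβ : LinearIndependent K β)
    {g₁ : Fin k → L} {b : Fin r → L} (hA : (mooreMatrix σ k g₁).det ≠ 0)
    (hR : mooreMatrix σ k b = mooreMatrix σ k g₁ * X) :
    LinearIndependent K (Fin.append g₁ b) := by
  refine Fintype.linearIndependent_iff.2 fun d hd => ?_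
  set κ : Fin k → K := fun l => d (Fin.castAdd r l)
  set c : Fin r → K := fun j => d (Fin.natAdd k j)
  have hsum : ∑ l, κ l • g₁ l + ∑ j, c j • b j = 0 := by
    simpa [Fin.sum_univ_add] using hd
  set ξ := X *ᵥ fun j => algebraMap K L (c j)
  have hξ : ξ = -fun l => algebraMap K L (κ l) := by
    rw [eq_neg_iff_add_eq_zero]
    refine eq_zero_of_mulVec_eq_zero hA (funext fun i => ?_)
    rw [mulVec_add, Pi.add_apply, mulVec_mulVec, ← hR, mooreMatrix_mulVec_algebraMap,
      mooreMatrix_mulVec_algebraMap, add_comm, ← map_add, hsum, map_zero, Pi.zero_apply]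
  have hc : c = 0 := by
    obtain ⟨l, hl⟩ := Function.ne_iff.1 hα
    rw [Pi.zero_apply] at hl
    refine Fintype.linearIndependent_iff.1 hβ c ?_ |> funext
    have h : σ (ξ l) - ξ l = _ := sub_mulVec_eq_of_map_sub_eq_vecMulVec σ hΦ c l
    rw [hξ] at h
    simpa [AlgEquiv.commutes, hl] using h.symm
  have hκ : κ = 0 := funext fun l => by
    simpa [hc, ξ, mulVec, dotProduct] using congrFun hξ l
  intro i
  exact Fin.addCases (fun l => congrFun hκ l) (fun j => congrFun hc j) i

theorem exists_map_sub_eq_vecMulVec_of_CX_eq {σ : L ≃ₐ[K] L}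
    (hσ : ∀ x, σ x = x → x ∈ Set.range (algebraMap K L)) {t r : ℕ}
    {X : Matrix (Fin (t + 1)) (Fin r) L} {g : Fin (t + 1 + r) → L} (hg : LinearIndependent K g)
    (hX : CX X = Submodule.span L (Set.range (mooreMatrix σ (t + 1) g))) :
    ∃ (α : Fin (t + 1) → L) (β : Fin r → L), LinearIndependent K α ∧ LinearIndependent K β ∧
      X.map σ - X = vecMulVec α β := by
  set g₁ : Fin (t + 1) → L := fun l => g (Fin.castAdd r l)
  have hg₁ : LinearIndependent K g₁ := hg.comp _ (Fin.castAdd_injective _ _)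
  set A := mooreMatrix σ (t + 1) g₁
  have hR : mooreMatrix σ (t + 1) (fun j => g (Fin.natAdd (t + 1) j)) = A * X :=
    submatrix_natAdd_eq_mul_of_span_le_CX hX.ge
  obtain ⟨β, hAΦ⟩ := (exists_mooreMatrix_mul_map_sub_eq_vecMulVec_iff σ g₁ X).2 <| by
    rw [← hR]
    rfl
  have hΦ : X.map σ - X = vecMulVec (fun l => A⁻¹ l 0) β := by
    rw [← nonsing_inv_mul_cancel_left A (X.map σ - X) (det_mooreMatrix_ne_zero hσ hg₁).isUnit,
      hAΦ, mul_vecMulVec, mulVec_single_one]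
    rfl
  refine ⟨_, β, linearIndependent_inv_mooreMatrix_apply_zero hσ hg₁,
    linearIndependent_of_map_sub_eq_vecMulVec hσ hΦ hg fun j => ?_, hΦ⟩
  simpa [A, mul_apply] using congrFun (congrFun hR 0) j

theorem exists_CX_eq_of_map_sub_eq_vecMulVec {σ : L ≃ₐ[K] L}
    (hσ : ∀ x, σ x = x → x ∈ Set.range (algebraMap K L)) {t r : ℕ}
    {X : Matrix (Fin (t + 1)) (Fin r) L} {α : Fin (t + 1) → L} {β : Fin r → L}
    (hα : LinearIndependent K α) (hβ : LinearIndependent K β) (hΦ : X.map σ - X = vecMulVec α β) :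
    ∃ g : Fin (t + 1 + r) → L, LinearIndependent K g ∧
      CX X = Submodule.span L (Set.range (mooreMatrix σ (t + 1) g)) := by
  obtain ⟨g₁, hg₁, hg₁α⟩ := exists_linearIndependent_mooreMatrix_mulVec_eq_single hσ hα
  have hA := det_mooreMatrix_ne_zero hσ hg₁
  have hR := (exists_mooreMatrix_mul_map_sub_eq_vecMulVec_iff σ g₁ X).1
    ⟨β, by rw [hΦ, mul_vecMulVec, hg₁α]⟩
  refine ⟨Fin.append g₁ _, linearIndependent_append_of_map_sub_eq_vecMulVec σ hΦ
    (fun h => hα.ne_zero 0 (congrFun h 0)) hβ hA hR, ?_⟩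
  rw [mooreMatrix_append_eq_mul σ g₁ _ X hR, span_range_mul_of_isUnit hA.isUnit]
  rfl

theorem exists_CX_eq_span_mooreMatrix_iff {σ : L ≃ₐ[K] L}
    (hσ : ∀ x, σ x = x → x ∈ Set.range (algebraMap K L)) {t r : ℕ}
    (X : Matrix (Fin (t + 1)) (Fin r) L) :
    (∃ g : Fin (t + 1 + r) → L, LinearIndependent K g ∧
        CX X = Submodule.span L (Set.range (mooreMatrix σ (t + 1) g))) ↔
      ∃ (α : Fin (t + 1) → L) (β : Fin r → L), LinearIndependent K α ∧ LinearIndependent K β ∧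
        X.map σ - X = vecMulVec α β :=
  ⟨fun ⟨_, hg, hX⟩ => exists_map_sub_eq_vecMulVec_of_CX_eq hσ hg hX,
    fun ⟨_, _, hα, hβ, hΦ⟩ => exists_CX_eq_of_map_sub_eq_vecMulVec hσ hα hβ hΦ⟩

lemma trace_mul_eq_zero_of_map_sub_eq_vecMulVec {σ : L ≃ₐ[K] L} {k r : ℕ}
    {X : Matrix (Fin k) (Fin r) L} {α : Fin k → L} {β : Fin r → L}
    (hΦ : X.map σ - X = vecMulVec α β) {x y : L}
    (hx : x ∈ Submodule.span K (Set.range β)) (hy : y ∈ Submodule.span K (Set.range α)) :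
    Algebra.trace K L (y * x) = 0 := by
  have hker : Submodule.span K (Set.range α) * Submodule.span K (Set.range β) ≤
      LinearMap.ker (Algebra.trace K L) := by
    rw [Submodule.span_mul_span, Submodule.span_le]
    rintro _ ⟨_, ⟨l, rfl⟩, _, ⟨j, rfl⟩, rfl⟩
    have h : σ (X l j) - X l j = α l * β j := by
      simpa [vecMulVec_apply] using congrFun (congrFun hΦ l) j
    change Algebra.trace K L (α l * β j) = 0
    rw [← h, map_sub, Algebra.trace_eq_of_algEquiv, sub_self]
  exact hker (Submodule.mul_mem_mul hy hx)

lemma rkq_eq_iff_linearIndependent {n : ℕ} (v : Fin n → L) :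
    rkq K v = n ↔ LinearIndependent K v := by
  rw [linearIndependent_iff_card_eq_finrank_span, Fintype.card_fin, rkq, eq_comm]
  rfl

section FiniteField

variable (K L) [Fintype K] [Finite L]

lemma frobeniusAlgEquivOfAlgebraic_pow_apply (n : ℕ) (x : L) :
    (FiniteField.frobeniusAlgEquivOfAlgebraic K L ^ n) x = x ^ Fintype.card K ^ n := by
  rw [AlgEquiv.coe_pow, FiniteField.coe_frobeniusAlgEquivOfAlgebraic_iterate]

variable {K L}

lemma mem_range_algebraMap_of_frobeniusAlgEquivOfAlgebraic_pow_apply_eq {s : ℕ}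
    (hs : s.Coprime (Module.finrank K L)) {x : L}
    (hx : (FiniteField.frobeniusAlgEquivOfAlgebraic K L ^ s) x = x) :
    x ∈ Set.range (algebraMap K L) := by
  set φ := FiniteField.frobeniusAlgEquivOfAlgebraic K L
  have hφ : φ ∈ Subgroup.zpowers (φ ^ s) := by
    rwa [mem_zpowers_pow_iff, FiniteField.orderOf_frobeniusAlgEquivOfAlgebraic]
  have hstab : Subgroup.zpowers (φ ^ s) ≤ MulAction.stabilizer Gal(L/K) x :=
    Subgroup.zpowers_le.2 hx
  rw [IsGalois.mem_range_algebraMap_iff_fixed]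
  intro f
  obtain ⟨n, rfl⟩ := (FiniteField.bijective_frobeniusAlgEquivOfAlgebraic_pow K L).2 f
  exact hstab (Subgroup.pow_mem _ hφ n)

end FiniteField

end MooreMatrix

theorem stmt12_general {K L : Type*} [Field K] [Field L] [Algebra K L] [Fintype K] [Fintype L]
    (q m k r s : ℕ) (hq : Fintype.card K = q) (hm : Module.finrank K L = m)
    (hk : 0 < k) (hsm : Nat.Coprime s m)
    (X : Matrix (Fin k) (Fin r) L) :
    IsGabidulin K q s k (CX X) ↔
      ∃ (α : Fin k → L) (β : Fin r → L),
        rkq K α = k ∧ rkq K β = r ∧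
        (∀ x ∈ Submodule.span K (Set.range β), ∀ y ∈ Submodule.span K (Set.range α),
          fieldTrace q m (y * x) = 0) ∧
        PhiS q s X = Matrix.vecMulVec α β := by
  obtain ⟨t, rfl⟩ : ∃ t, k = t + 1 := ⟨k - 1, by omega⟩
  subst hq hm
  set σ := FiniteField.frobeniusAlgEquivOfAlgebraic K L ^ s
  have hσ : ∀ x, σ x = x → x ∈ Set.range (algebraMap K L) := fun _ =>
    mem_range_algebraMap_of_frobeniusAlgEquivOfAlgebraic_pow_apply_eq hsm
  have hGab : IsGabidulin K (Fintype.card K) s (t + 1) (CX X) ↔ ∃ g : Fin (t + 1 + r) → L,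
      LinearIndependent K g ∧ CX X = Submodule.span L (Set.range (mooreMatrix σ (t + 1) g)) := by
    simp only [IsGabidulin, rkq_eq_iff_linearIndependent, mooreMatrix, σ, ← pow_mul,
      frobeniusAlgEquivOfAlgebraic_pow_apply]
    rfl
  have hΦ : PhiS (Fintype.card K) s X = X.map σ - X := by
    ext i j
    simp only [PhiS, σ, Matrix.sub_apply, map_apply, of_apply,
      frobeniusAlgEquivOfAlgebraic_pow_apply]
  have htrace (x : L) : fieldTrace (Fintype.card K) (Module.finrank K L) x =
      algebraMap K L (Algebra.trace K L x) := by
    rw [FiniteField.algebraMap_trace_eq_sum_pow, Nat.card_eq_fintype_card]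
    rfl
  simp only [hGab, exists_CX_eq_span_mooreMatrix_iff hσ, hΦ, rkq_eq_iff_linearIndependent, htrace]
  refine exists₂_congr fun α β => ⟨fun ⟨hα, hβ, hX⟩ => ⟨hα, hβ, fun x hx y hy => ?_, hX⟩,
    fun ⟨hα, hβ, _, hX⟩ => ⟨hα, hβ, hX⟩⟩
  rw [trace_mul_eq_zero_of_map_sub_eq_vecMulVec hX hx hy, map_zero]

/-- standard form of Gabidulin codes: `C_X` is a generalized Gabidulin code
of parameter `s` iff `Φ_s(X) = αᵀβ` for some `α, β` with `rk_q(α) = k`, `rk_q(β) = r` and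
`supp_q(β) ⊆ supp_q(α)^×`. -/
theorem stmt12 {K L : Type*} [Field K] [Field L] [Algebra K L] [Fintype K] [Fintype L]
    (q m k r s : ℕ) (hq : Fintype.card K = q) (hm : Module.finrank K L = m)
    (hk : 0 < k) (hr : 0 < r) (hnm : k + r ≤ m) (hs : 0 < s) (hsm : Nat.Coprime s m)
    (X : Matrix (Fin k) (Fin r) L) :
    IsGabidulin K q s k (CX X) ↔
      ∃ (α : Fin k → L) (β : Fin r → L),
        rkq K α = k ∧ rkq K β = r ∧
        (∀ x ∈ Submodule.span K (Set.range β), ∀ y ∈ Submodule.span K (Set.range α),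
          fieldTrace q m (y * x) = 0) ∧
        PhiS q s X = Matrix.vecMulVec α β :=
  stmt12_general q m k r s hq hm hk hsm X
end

section
/- Let 0 < k < n ≤ m and let s be a positive integer coprime to m. The number of distinct k-dimensional generalized Gabidulin codes of length n and parameter s over 𝔽_{q^m}, i.e., the cardinality of the set { G_{k,s}(g) : g ∈ 𝔽_{q^m}^n, rk_q(g) = n } of subspaces of 𝔽_{q^m}^n, equals ∏_{i=1}^{n−1} (q^m − q^i). -/
open Finset

/-!
Write `τ = Frob^s`, so that the `i`-th row of `M_{s,k}(g)` is `τⁱ(g)` and the codewords of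
`G_{k,s}(g)` are the vectors `(A(g₁), …, A(gₙ))` with `A` a `τ`-linearized polynomial
`∑_{i<k} aᵢ τⁱ`. Since `s` is coprime to `m`, the fixed field of `τ` is `𝔽_q`, and right division
by `τ - u` shows that such an `A` of `τ`-degree `d` has a kernel of `𝔽_q`-dimension at most `d`.

If `G_{k,s}(g') = G_{k,s}(g)`, write `g' = A(g)` with `A` of degree `d < k`. If `d ≥ 1`, the row
`τ^{k-d}(g')` of the code equals `B(g)` with `deg B < k`, so `τ^{k-d} ∘ A - B` has degree exactly
`k` and kills the `n > k` independent entries of `g`, which is impossible. Hence `d = 0`, i.e. `g'`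
is a multiple of `g`: the codes correspond to the `𝔽_{q^m}ˣ`-orbits of the
`∏_{i<n} (q^m - q^i)` vectors of full `q`-rank, each orbit having `q^m - 1` elements.
-/

open Module LinearMap

theorem LinearMap.finrank_ker_comp_le {K V W X : Type*} [Field K] [AddCommGroup V] [Module K V]
    [AddCommGroup W] [Module K W] [AddCommGroup X] [Module K X]
    [FiniteDimensional K V] [FiniteDimensional K W] (f : V →ₗ[K] W) (g : W →ₗ[K] X) :
    finrank K (ker (g ∘ₗ f)) ≤ finrank K (ker g) + finrank K (ker f) := by
  have := LinearMap.lift_rank_comap_le (f := f) (ker g)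
  rw [← Module.finrank_eq_rank, ← Module.finrank_eq_rank, ← Module.finrank_eq_rank] at this
  rw [ker_comp]
  simpa only [Cardinal.lift_natCast, ← Nat.cast_add, Nat.cast_le] using this

theorem Set.ncard_eq_ncard_image_mul {α β : Type*} {f : α → β} {s : Set α} (hs : s.Finite)
    {c : ℕ} (h : ∀ a ∈ s, (s ∩ f ⁻¹' {f a}).ncard = c) : s.ncard = (f '' s).ncard * c := by
  classical
  lift s to Finset α using hs
  rw [Set.ncard_coe_finset, ← Finset.coe_image, Set.ncard_coe_finset,
    Finset.card_eq_sum_card_image f, Finset.sum_const_nat]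
  intro b hb
  obtain ⟨a, ha, rfl⟩ := Finset.mem_image.1 hb
  rw [← h a ha, ← Set.ncard_coe_finset]
  congr 1
  ext
  simp

theorem rkq_eq_card_iff {K L ι : Type*} [Field K] [Field L] [Algebra K L] [Fintype ι]
    {g : ι → L} : rkq K g = Fintype.card ι ↔ LinearIndependent K g := by
  rw [linearIndependent_iff_card_eq_finrank_span, eq_comm]
  rfl

section

variable {K L : Type*} [Field K] [Field L] [Algebra K L]

/-- The `σ`-linearized polynomials `∑_{i<d} cᵢ σⁱ` (`cᵢ ∈ L`), as `K`-linear endomorphisms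
of `L`. -/
def skewDegreeLT (σ : L →ₐ[K] L) (d : ℕ) : Submodule L (Module.End K L) :=
  Submodule.span L ((fun i => (σ ^ i).toLinearMap) '' Set.Iio d)

namespace skewDegreeLT

variable (σ : L →ₐ[K] L)

@[simp] lemma zero : skewDegreeLT σ 0 = ⊥ := by
  simp [skewDegreeLT]

lemma succ (d : ℕ) :
    skewDegreeLT σ (d + 1) = skewDegreeLT σ d ⊔ L ∙ (σ ^ d).toLinearMap := by
  have : Set.Iio (d + 1) = insert d (Set.Iio d) := by ext; simp
  rw [skewDegreeLT, skewDegreeLT, this, Set.image_insert_eq, Submodule.span_insert, sup_comm]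

lemma one : skewDegreeLT σ 1 = L ∙ LinearMap.id := by
  rw [succ, zero, bot_sup_eq, pow_zero]
  rfl

lemma mono : Monotone (skewDegreeLT σ) := fun _ _ h =>
  Submodule.span_mono (Set.image_mono (Set.Iio_subset_Iio h))

lemma pow_mem {i d : ℕ} (h : i < d) : (σ ^ i).toLinearMap ∈ skewDegreeLT σ d :=
  Submodule.subset_span ⟨i, h, rfl⟩

lemma pow_comp_mem {d : ℕ} {p : Module.End K L} (hp : p ∈ skewDegreeLT σ d) (j : ℕ) :
    (σ ^ j).toLinearMap ∘ₗ p ∈ skewDegreeLT σ (d + j) := by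
  induction hp using Submodule.span_induction with
  | mem p hp =>
    obtain ⟨i, hi, rfl⟩ := hp
    have : (σ ^ j).toLinearMap ∘ₗ (σ ^ i).toLinearMap = (σ ^ (j + i)).toLinearMap := by
      ext x; simp [pow_add]
    rw [this]
    exact pow_mem σ (by have := Set.mem_Iio.1 hi; omega)
  | zero => simp
  | add p p' _ _ hp hp' => simpa [LinearMap.comp_add] using add_mem hp hp'
  | smul c p _ hp =>
    have : (σ ^ j).toLinearMap ∘ₗ (c • p) = (σ ^ j) c • ((σ ^ j).toLinearMap ∘ₗ p) := by
      ext x; simp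
    rw [this]
    exact Submodule.smul_mem _ _ hp

lemma pow_comp_smul_pow (i j : ℕ) (c : L) :
    (σ ^ j).toLinearMap ∘ₗ (c • (σ ^ i).toLinearMap) = (σ ^ j) c • (σ ^ (i + j)).toLinearMap := by
  rw [add_comm, pow_add]
  ext x
  simp

lemma smul_pow_succ_eq (c u : L) (d : ℕ) :
    c • (σ ^ (d + 1)).toLinearMap = (c • (σ ^ d).toLinearMap) ∘ₗ
      (σ.toLinearMap - u • LinearMap.id) + (c * (σ ^ d) u) • (σ ^ d).toLinearMap := by
  ext x
  simp [pow_succ, mul_sub, mul_assoc]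

lemma exists_eq_comp_add (u : L) {d : ℕ} {f : Module.End K L}
    (hf : f ∈ skewDegreeLT σ (d + 1)) : ∃ g ∈ skewDegreeLT σ d, ∃ r : L,
      f = g ∘ₗ (σ.toLinearMap - u • LinearMap.id) + r • LinearMap.id := by
  induction d generalizing f with
  | zero =>
    obtain ⟨r, rfl⟩ := Submodule.mem_span_singleton.1 (one σ ▸ hf)
    exact ⟨0, zero_mem _, r, by simp⟩
  | succ d ih =>
    rw [succ] at hf
    obtain ⟨p, hp, z, hz, rfl⟩ := Submodule.mem_sup.1 hf
    obtain ⟨c, rfl⟩ := Submodule.mem_span_singleton.1 hz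
    obtain ⟨g, hg, r, hgr⟩ := ih (f := p + (c * (σ ^ d) u) • (σ ^ d).toLinearMap)
      (add_mem hp (Submodule.smul_mem _ _ (pow_mem σ d.lt_succ_self)))
    refine ⟨g + c • (σ ^ d).toLinearMap,
      add_mem (mono σ d.le_succ hg) (Submodule.smul_mem _ _ (pow_mem σ d.lt_succ_self)), r, ?_⟩
    rw [smul_pow_succ_eq σ c u, add_comp, ← add_assoc, add_right_comm, hgr]
    abel

end skewDegreeLT

section FixedField

variable (σ : L →ₐ[K] L) (hσ : ∀ x, σ x = x → x ∈ Set.range (algebraMap K L))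
include hσ

lemma finrank_ker_sub_smul_id_le_one (u : L) :
    finrank K (ker (σ.toLinearMap - u • LinearMap.id)) ≤ 1 := by
  by_cases hbot : ker (σ.toLinearMap - u • LinearMap.id) = ⊥
  · rw [hbot, finrank_bot]
    exact zero_le_one
  obtain ⟨a, ha, ha0⟩ := Submodule.exists_mem_ne_zero_of_ne_bot hbot
  have eigen : ∀ x ∈ ker (σ.toLinearMap - u • LinearMap.id), σ x = u * x := fun x hx => by
    rw [LinearMap.mem_ker, LinearMap.sub_apply, sub_eq_zero] at hx
    simpa using hx
  have hu : u ≠ 0 := by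
    rintro rfl
    simpa [ha0] using eigen a ha
  have hle : ker (σ.toLinearMap - u • LinearMap.id) ≤ K ∙ a := by
    intro x hx
    obtain ⟨b, hb⟩ := hσ (x / a) (by rw [map_div₀, eigen x hx, eigen a ha]; field_simp)
    exact Submodule.mem_span_singleton.2 ⟨b, by rw [Algebra.smul_def, hb, div_mul_cancel₀ x ha0]⟩
  exact (Submodule.finrank_mono hle).trans (finrank_span_singleton ha0).le

variable [FiniteDimensional K L]

theorem finrank_ker_le_of_sub_smul_pow_mem {d : ℕ} {f : Module.End K L} {c : L} (hc : c ≠ 0)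
    (hf : f - c • (σ ^ d).toLinearMap ∈ skewDegreeLT σ d) : finrank K (ker f) ≤ d := by
  induction d generalizing f c with
  | zero =>
    rw [skewDegreeLT.zero, Submodule.mem_bot, sub_eq_zero] at hf
    have : ker f = ⊥ := by
      rw [hf, ker_eq_bot']
      intro x hx
      rw [LinearMap.smul_apply] at hx
      simpa [hc] using hx
    rw [this, finrank_bot]
  | succ d ih =>
    by_cases hbot : ker f = ⊥
    · rw [hbot, finrank_bot]
      exact Nat.zero_le _
    obtain ⟨a, ha, ha0⟩ := Submodule.exists_mem_ne_zero_of_ne_bot hbot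
    -- divide on the right by the degree-one operator `Q` killing the root `a` of `f`
    have hQa : (σ.toLinearMap - (σ a / a) • LinearMap.id : Module.End K L) a = 0 := by
      simp [ha0]
    set Q := σ.toLinearMap - (σ a / a) • LinearMap.id
    obtain ⟨g, hg, r, hgr⟩ := skewDegreeLT.exists_eq_comp_add σ (σ a / a)
      (f := f - c • (σ ^ (d + 1)).toLinearMap + (c * (σ ^ d) (σ a / a)) • (σ ^ d).toLinearMap)
      (add_mem hf (Submodule.smul_mem _ _ (skewDegreeLT.pow_mem σ d.lt_succ_self)))
    have hfQ : f = (g + c • (σ ^ d).toLinearMap) ∘ₗ Q + r • LinearMap.id := by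
      rw [add_comp, add_right_comm, ← hgr, skewDegreeLT.smul_pow_succ_eq σ c (σ a / a)]
      abel
    have hr : r = 0 := by
      have := congrArg (· a) hfQ
      rw [LinearMap.add_apply, LinearMap.smul_apply, comp_apply, hQa] at this
      rw [mem_ker.1 ha, map_zero, zero_add, LinearMap.id_apply, smul_eq_mul] at this
      exact (mul_eq_zero.1 this.symm).resolve_right ha0
    rw [hfQ, hr, zero_smul, add_zero]
    calc finrank K (ker ((g + c • (σ ^ d).toLinearMap) ∘ₗ Q))
        ≤ finrank K (ker (g + c • (σ ^ d).toLinearMap)) + finrank K (ker Q) :=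
          finrank_ker_comp_le Q _
      _ ≤ d + 1 := add_le_add (ih hc (by simpa using hg))
          (finrank_ker_sub_smul_id_le_one σ hσ _)

theorem card_le_of_linearIndependent_of_apply_eq_zero {ι : Type*} [Fintype ι] {v : ι → L}
    (hv : LinearIndependent K v) {d : ℕ} {f : Module.End K L} {c : L} (hc : c ≠ 0)
    (hf : f - c • (σ ^ d).toLinearMap ∈ skewDegreeLT σ d) (hfv : ∀ i, f (v i) = 0) :
    Fintype.card ι ≤ d := by
  have hle : Submodule.span K (Set.range v) ≤ ker f := by
    rw [Submodule.span_le]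
    rintro _ ⟨i, rfl⟩
    exact hfv i
  rw [← finrank_span_eq_card hv]
  exact (Submodule.finrank_mono hle).trans (finrank_ker_le_of_sub_smul_pow_mem σ hσ hc hf)

end FixedField

section MooreCode

variable (σ : L →ₐ[K] L) {ι : Type*}

def mooreCode (k : ℕ) (g : ι → L) : Submodule L (ι → L) :=
  Submodule.span L (Set.range fun i : Fin k => fun j => (σ ^ (i : ℕ)) (g j))

def evalFamily (g : ι → L) : Module.End K L →ₗ[L] (ι → L) where
  toFun A j := A (g j)
  map_add' _ _ := rfl
  map_smul' _ _ := rfl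

lemma mooreCode_eq_map (k : ℕ) (g : ι → L) :
    mooreCode σ k g = (skewDegreeLT σ k).map (evalFamily g) := by
  rw [mooreCode, skewDegreeLT, Submodule.map_span, Set.image_image, ← Fin.range_val,
    ← Set.range_comp]
  rfl

lemma mem_mooreCode_iff {k : ℕ} {g v : ι → L} :
    v ∈ mooreCode σ k g ↔ ∃ A ∈ skewDegreeLT σ k, ∀ j, A (g j) = v j := by
  rw [mooreCode_eq_map, Submodule.mem_map]
  exact exists_congr fun A => and_congr_right fun _ => funext_iff

lemma pow_apply_mem_mooreCode {k i : ℕ} (hi : i < k) (g : ι → L) :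
    (fun j => (σ ^ i) (g j)) ∈ mooreCode σ k g :=
  Submodule.subset_span ⟨⟨i, hi⟩, rfl⟩

lemma mooreCode_smul_le (k : ℕ) (g : ι → L) (α : L) :
    mooreCode σ k (α • g) ≤ mooreCode σ k g := by
  rw [mooreCode, Submodule.span_le]
  rintro _ ⟨i, rfl⟩
  have : (fun j => (σ ^ (i : ℕ)) ((α • g) j)) =
      (σ ^ (i : ℕ)) α • fun j => (σ ^ (i : ℕ)) (g j) := by
    ext j; simp
  change (fun j => (σ ^ (i : ℕ)) ((α • g) j)) ∈ mooreCode σ k g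
  rw [this]
  exact Submodule.smul_mem _ _ (pow_apply_mem_mooreCode σ i.isLt g)

lemma mooreCode_smul {α : L} (hα : α ≠ 0) (k : ℕ) (g : ι → L) :
    mooreCode σ k (α • g) = mooreCode σ k g := by
  refine le_antisymm (mooreCode_smul_le σ k g α) ?_
  simpa [smul_smul, hα] using mooreCode_smul_le σ k (α • g) α⁻¹

variable (hσ : ∀ x, σ x = x → x ∈ Set.range (algebraMap K L)) [FiniteDimensional K L] [Fintype ι]
include hσ

theorem exists_eq_smul_of_mooreCode_eq {k : ℕ} (hk : 0 < k) (hkι : k < Fintype.card ι)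
    {g g' : ι → L} (hg : LinearIndependent K g) (h : mooreCode σ k g' = mooreCode σ k g) :
    ∃ α : L, g' = α • g := by
  classical
  obtain ⟨A, hA, hAg⟩ := (mem_mooreCode_iff σ).1 (h ▸ pow_apply_mem_mooreCode σ hk g')
  have hdeg : ∃ d, A ∈ skewDegreeLT σ (d + 1) := ⟨k - 1, by rwa [Nat.sub_add_cancel hk]⟩
  have hAd : A ∈ skewDegreeLT σ (Nat.find hdeg + 1) := Nat.find_spec hdeg
  have hdk : Nat.find hdeg < k := by
    have := Nat.find_le (n := k - 1) (by rwa [Nat.sub_add_cancel hk]) (h := hdeg)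
    omega
  set d := Nat.find hdeg
  rcases Nat.eq_zero_or_pos d with hd0 | hd0
  · rw [hd0, skewDegreeLT.one] at hAd
    obtain ⟨α, rfl⟩ := Submodule.mem_span_singleton.1 hAd
    exact ⟨α, funext fun j => by simpa using (hAg j).symm⟩
  exfalso
  have hAd' : A ∉ skewDegreeLT σ d := by
    simpa [Nat.sub_add_cancel hd0] using Nat.find_min hdeg (m := d - 1) (by omega)
  rw [skewDegreeLT.succ] at hAd
  obtain ⟨p, hp, _, hz, hpz⟩ := Submodule.mem_sup.1 hAd
  obtain ⟨c, rfl⟩ := Submodule.mem_span_singleton.1 hz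
  have hc : c ≠ 0 := by
    rintro rfl
    exact hAd' (by simpa [← hpz] using hp)
  -- the row `σ^{k-d}(g')` of the code is `B(g)` with `deg B < k`, while `σ^{k-d} ∘ A` has degree `k`
  obtain ⟨B, hB, hBg⟩ := (mem_mooreCode_iff σ).1
    (h ▸ pow_apply_mem_mooreCode σ (i := k - d) (by omega) g')
  have hdj : d + (k - d) = k := by omega
  have hf : (σ ^ (k - d)).toLinearMap ∘ₗ A - B - (σ ^ (k - d)) c • (σ ^ k).toLinearMap ∈
      skewDegreeLT σ k := by
    rw [← hpz, comp_add, skewDegreeLT.pow_comp_smul_pow, hdj, add_sub_right_comm,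
      add_sub_cancel_right]
    exact sub_mem (hdj ▸ skewDegreeLT.pow_comp_mem σ hp (k - d) :) hB
  have hfg : ∀ i, ((σ ^ (k - d)).toLinearMap ∘ₗ A - B) (g i) = 0 := fun i => by
    simp [hAg, hBg]
  have := card_le_of_linearIndependent_of_apply_eq_zero σ hσ hg
    ((map_ne_zero (σ ^ (k - d))).2 hc) hf hfg
  omega

theorem setOf_linearIndependent_inter_preimage_mooreCode_eq_range {k : ℕ} (hk : 0 < k)
    (hkι : k < Fintype.card ι) {g : ι → L} (hg : LinearIndependent K g) :
    {g' | LinearIndependent K g'} ∩ mooreCode σ k ⁻¹' {mooreCode σ k g} =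
      Set.range fun α : Lˣ => (α : L) • g := by
  ext g'
  simp only [Set.mem_inter_iff, Set.mem_ofPred_eq, Set.mem_preimage, Set.mem_singleton_iff,
    Set.mem_range]
  constructor
  · rintro ⟨hg', hcode⟩
    obtain ⟨α, rfl⟩ := exists_eq_smul_of_mooreCode_eq σ hσ hk hkι hg hcode
    obtain ⟨i⟩ : Nonempty ι := Fintype.card_pos_iff.1 (by omega)
    have hα : α ≠ 0 := by
      rintro rfl
      exact hg'.ne_zero i (by simp)
    exact ⟨Units.mk0 α hα, rfl⟩
  · rintro ⟨α, rfl⟩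
    refine ⟨?_, mooreCode_smul σ α.ne_zero k g⟩
    exact hg.map' (DistribMulAction.toLinearEquiv K L α).toLinearMap (LinearEquiv.ker _)

end MooreCode

end

namespace FiniteField

variable {K L : Type*} [Field K] [Field L] [Algebra K L] [Fintype K]

theorem frobeniusAlgHom_pow_pow_apply (s i : ℕ) (x : L) :
    ((frobeniusAlgHom K L ^ s) ^ i) x = x ^ Fintype.card K ^ (s * i) := by
  rw [← pow_mul, AlgHom.coe_pow, coe_frobeniusAlgHom, pow_iterate]

theorem mem_range_algebraMap_of_frobeniusAlgHom_pow_apply_eq [Finite L] {s : ℕ}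
    (hs : s.Coprime (finrank K L)) {x : L} (hx : (frobeniusAlgHom K L ^ s) x = x) :
    x ∈ Set.range (algebraMap K L) := by
  obtain ⟨u, -, hu⟩ := Nat.exists_mul_mod_eq_of_coprime 1 hs finrank_pos.ne'
  have hfin : IsOfFinOrder (frobeniusAlgHom K L) :=
    orderOf_pos_iff.1 (orderOf_frobeniusAlgHom K L ▸ finrank_pos)
  have hfrob : (frobeniusAlgHom K L ^ s) ^ u = frobeniusAlgHom K L := by
    rw [← pow_mul]
    conv_rhs => rw [← pow_one (frobeniusAlgHom K L)]
    rwa [hfin.pow_inj_mod, orderOf_frobeniusAlgHom]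
  have hxq : Function.IsFixedPt (· ^ Fintype.card K) x := by
    have := Function.IsFixedPt.iterate hx u
    rwa [← AlgHom.coe_pow, hfrob] at this
  rw [IsGalois.mem_range_algebraMap_iff_fixed]
  intro f
  obtain ⟨i, rfl⟩ := (bijective_frobeniusAlgEquivOfAlgebraic_pow K L).2 f
  rw [AlgEquiv.coe_pow, coe_frobeniusAlgEquivOfAlgebraic]
  exact hxq.iterate i

end FiniteField

theorem stmt13_general {K L : Type*} [Field K] [Field L] [Algebra K L] [Fintype K] [Fintype L]
    (q m k n s : ℕ) (hq : Fintype.card K = q) (hm : Module.finrank K L = m)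
    (hk : 0 < k) (hkn : k < n) (hnm : n ≤ m) (hsm : Nat.Coprime s m) :
    Set.ncard {C : Submodule L (Fin n → L) | ∃ g : Fin n → L, rkq K g = n ∧
        C = Submodule.span L (Set.range fun i : Fin k => fun j => g j ^ q ^ (s * (i : ℕ)))} =
      ∏ i ∈ Finset.range (n - 1), (q ^ m - q ^ (i + 1)) := by
  subst hq hm
  set τ := FiniteField.frobeniusAlgHom K L ^ s
  have hτ : ∀ x, τ x = x → x ∈ Set.range (algebraMap K L) := fun x =>
    FiniteField.mem_range_algebraMap_of_frobeniusAlgHom_pow_apply_eq hsm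
  have hcodes : {C : Submodule L (Fin n → L) | ∃ g : Fin n → L, rkq K g = n ∧
      C = Submodule.span L (Set.range fun i : Fin k => fun j => g j ^ Fintype.card K ^ (s * i))} =
      mooreCode τ k '' {g | LinearIndependent K g} := by
    ext C
    simp [mooreCode, τ, FiniteField.frobeniusAlgHom_pow_pow_apply, eq_comm, ← rkq_eq_card_iff]
  have hcount := Set.ncard_eq_ncard_image_mul
    (Set.toFinite {g : Fin n → L | LinearIndependent K g})
    (f := mooreCode τ k) (c := Fintype.card K ^ finrank K L - 1) fun g hg => by
      have hg0 : g ≠ 0 := fun h0 => hg.ne_zero ⟨0, by omega⟩ (congrFun h0 _)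
      rw [setOf_linearIndependent_inter_preimage_mooreCode_eq_range τ hτ hk
          (by simpa using hkn) hg,
        Set.ncard_range_of_injective (f := fun α : Lˣ => (α : L) • g)
          ((smul_left_injective L hg0).comp Units.val_injective),
        Nat.card_units, Nat.card_eq_fintype_card, Module.card_eq_pow_finrank (K := K)]
  rw [← Nat.card_coe_set_eq, Set.coe_ofPred, card_linearIndependent hnm, ← hcodes] at hcount
  obtain ⟨n, rfl⟩ : ∃ n', n = n' + 1 := ⟨n - 1, by omega⟩
  rw [Fin.prod_univ_eq_prod_range (fun i => _ - _ ^ i), Finset.prod_range_succ', pow_zero] at hcount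
  rw [Nat.add_sub_cancel]
  have hunits : 0 < Fintype.card K ^ finrank K L - 1 :=
    Nat.sub_pos_of_lt (Nat.one_lt_pow finrank_pos.ne' (Fintype.one_lt_card (α := K)))
  exact (Nat.eq_of_mul_eq_mul_right hunits hcount).symm

/-- the number of distinct `k`-dimensional generalized Gabidulin codes of
length `n` and parameter `s` over `𝔽_{q^m}` equals `∏_{i=1}^{n-1} (q^m - q^i)`. -/
theorem stmt13 {K L : Type*} [Field K] [Field L] [Algebra K L] [Fintype K] [Fintype L]
    (q m k n s : ℕ) (hq : Fintype.card K = q) (hm : Module.finrank K L = m)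
    (hk : 0 < k) (hkn : k < n) (hnm : n ≤ m) (hs : 0 < s) (hsm : Nat.Coprime s m) :
    Set.ncard {C : Submodule L (Fin n → L) | ∃ g : Fin n → L, rkq K g = n ∧
        C = Submodule.span L (Set.range fun i : Fin k => fun j => g j ^ q ^ (s * (i : ℕ)))} =
      ∏ i ∈ Finset.range (n - 1), (q ^ m - q ^ (i + 1)) :=
  stmt13_general q m k n s hq hm hk hkn hnm hsm
end
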